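/- Let X be a random vector in ℝ^p and Y a random variable. If η ∈ ℝ^{p×d} satisfies Y ⫫ X | ηᵀX, and γ ∈ ℝ^{p×e} is a matrix whose column space contains the column space of η, then Y ⫫ X | γᵀX. That is, any linear subspace containing a dimension reduction subspace is itself a dimension reduction subspace. -/

import Mathlib

open MeasureTheory ProbabilityTheory Matrix

/-- `f` and `g` are conditionally independent given (the σ-algebra generated by) `h`. -/
def CondIndepGiven {Ω : Type*} [mΩ : MeasurableSpace Ω] [StandardBorelSpace Ω]
    {α β γ : Type*} [MeasurableSpace α] [MeasurableSpace β] [MeasurableSpace γ]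
    (μ : Measure Ω) [IsFiniteMeasure μ]
    (f : Ω → α) (g : Ω → β) (h : Ω → γ) : Prop :=
  CondIndepFun (MeasurableSpace.comap h inferInstance ⊓ mΩ) inf_le_right f g μ

/-- The column space of a matrix `η`. -/
def colSpace {p d : ℕ} (η : Matrix (Fin p) (Fin d) ℝ) : Submodule ℝ (Fin p → ℝ) :=
  LinearMap.range η.mulVecLin

/-!
For a conditioning σ-algebra `m ≤ σ(X)`, `Y ⫫ X | m` holds iff `P(Y ∈ A | X) = P(Y ∈ A | m)` a.s.
for every event `A` of `Y`, i.e. iff `P(Y ∈ A | X)` is already `m`-measurable. By the tower property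
this passes to every σ-algebra between `m` and `σ(X)`. If the column space of `γ` contains that of
`η`, then `η = γ B` for a matrix `B`, so `σ(ηᵀX) ≤ σ(γᵀX) ≤ σ(X)`.
-/

section CondIndep

variable {Ω : Type*} {m m₁ m₂ mΩ : MeasurableSpace Ω} {μ : Measure Ω} [IsFiniteMeasure μ]

lemma condExp_indicator_ae_eq_mul_condExp {g : Ω → ℝ} (hg : StronglyMeasurable[m] g)
    (hgi : Integrable g μ) {t : Set Ω} (ht : MeasurableSet t) :
    μ[t.indicator g | m] =ᵐ[μ] g * μ⟦t | m⟧ := by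
  have hprod : t.indicator g = g * t.indicator fun _ => 1 := by
    ext ω
    by_cases hω : ω ∈ t <;> simp [hω]
  rw [hprod]
  exact condExp_mul_of_stronglyMeasurable_left hg (hprod ▸ hgi.indicator ht)
    ((integrable_const 1).indicator ht)

variable [StandardBorelSpace Ω]

lemma condIndep_iff_condExp_indicator_ae_eq (hm : m ≤ m₂) (hm₁ : m₁ ≤ mΩ) (hm₂ : m₂ ≤ mΩ) :
    CondIndep m m₁ m₂ (hm.trans hm₂) μ ↔
      ∀ s, MeasurableSet[m₁] s → μ⟦s | m₂⟧ =ᵐ[μ] μ⟦s | m⟧ := by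
  rw [condIndep_iff m m₁ m₂ (hm.trans hm₂) hm₁ hm₂ μ]
  constructor
  · intro h s hs
    have hsΩ := hm₁ s hs
    refine (ae_eq_condExp_of_forall_setIntegral_eq hm₂ ((integrable_const 1).indicator hsΩ)
      (fun _ _ _ => integrable_condExp.integrableOn) (fun t ht _ => ?_)
      (stronglyMeasurable_condExp.mono hm).aestronglyMeasurable).symm
    have htΩ := hm₂ t ht
    calc ∫ ω in t, (μ⟦s | m⟧) ω ∂μ = ∫ ω, μ[t.indicator (μ⟦s | m⟧) | m] ω ∂μ := by
          rw [integral_condExp (hm.trans hm₂), integral_indicator htΩ]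
      _ = ∫ ω, (μ⟦s | m⟧ * μ⟦t | m⟧) ω ∂μ :=
          integral_congr_ae
            (condExp_indicator_ae_eq_mul_condExp stronglyMeasurable_condExp integrable_condExp htΩ)
      _ = ∫ ω, (μ⟦s ∩ t | m⟧) ω ∂μ := integral_congr_ae (h s t hs ht).symm
      _ = ∫ ω in t, s.indicator (fun _ => (1 : ℝ)) ω ∂μ := by
          rw [integral_condExp (hm.trans hm₂), setIntegral_indicator hsΩ,
            integral_indicator (hsΩ.inter htΩ), Set.inter_comm]
  · intro h s t hs ht
    calc μ⟦s ∩ t | m⟧ =ᵐ[μ] μ[μ⟦s ∩ t | m₂⟧ | m] := (condExp_condExp_of_le hm hm₂).symm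
      _ =ᵐ[μ] μ[t.indicator (μ⟦s | m₂⟧) | m] := by
          refine condExp_congr_ae ?_
          rw [Set.inter_comm, ← Set.indicator_indicator]
          exact condExp_indicator ((integrable_const 1).indicator (hm₁ s hs)) ht
      _ =ᵐ[μ] μ[t.indicator (μ⟦s | m⟧) | m] := condExp_congr_ae ((h s hs).indicator (s := t))
      _ =ᵐ[μ] μ⟦s | m⟧ * μ⟦t | m⟧ :=
          condExp_indicator_ae_eq_mul_condExp stronglyMeasurable_condExp integrable_condExp
            (hm₂ t ht)

lemma CondIndep.mono_cond {m' : MeasurableSpace Ω} (hmm' : m ≤ m') (hm' : m' ≤ m₂)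
    (hm₁ : m₁ ≤ mΩ) (hm₂ : m₂ ≤ mΩ) (h : CondIndep m m₁ m₂ ((hmm'.trans hm').trans hm₂) μ) :
    CondIndep m' m₁ m₂ (hm'.trans hm₂) μ := by
  rw [condIndep_iff_condExp_indicator_ae_eq (hmm'.trans hm') hm₁ hm₂] at h
  refine (condIndep_iff_condExp_indicator_ae_eq hm' hm₁ hm₂).2 fun s hs => ?_
  calc μ⟦s | m₂⟧ =ᵐ[μ] μ⟦s | m⟧ := h s hs
    _ = μ[μ⟦s | m⟧ | m'] :=
        (condExp_of_stronglyMeasurable (hm'.trans hm₂) (stronglyMeasurable_condExp.mono hmm')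
          integrable_condExp).symm
    _ =ᵐ[μ] μ[μ⟦s | m₂⟧ | m'] := condExp_congr_ae (h s hs).symm
    _ =ᵐ[μ] μ⟦s | m'⟧ := condExp_condExp_of_le hm' hm₂

end CondIndep

lemma exists_eq_mul_of_colSpace_le {p d e : ℕ} {η : Matrix (Fin p) (Fin d) ℝ}
    {γ : Matrix (Fin p) (Fin e) ℝ} (h : colSpace η ≤ colSpace γ) :
    ∃ B : Matrix (Fin e) (Fin d) ℝ, η = γ * B := by
  have hcol (j : Fin d) : ∃ c, γ *ᵥ c = ηᵀ j :=
    h ⟨Pi.single j 1, by ext i; simp [Matrix.mulVec_single]⟩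
  choose c hc using hcol
  refine ⟨(of c)ᵀ, ?_⟩
  ext i j
  simpa [Matrix.mul_apply, Matrix.mulVec, dotProduct] using (congrFun (hc j) i).symm

/-- **Supersets of dimension reduction subspaces are dimension reduction subspaces.**
If `Y ⫫ X | ηᵀX` and the column space of `γ` contains that of `η`, then `Y ⫫ X | γᵀX`. -/
theorem drs_mono
    {Ω : Type*} [MeasurableSpace Ω] [StandardBorelSpace Ω]
    (μ : Measure Ω) [IsProbabilityMeasure μ] {p d e : ℕ}
    (X : Ω → Fin p → ℝ) (hX : Measurable X) (Y : Ω → ℝ) (hY : Measurable Y)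
    (η : Matrix (Fin p) (Fin d) ℝ) (γ : Matrix (Fin p) (Fin e) ℝ)
    (hsub : colSpace η ≤ colSpace γ)
    (hDRS : CondIndepGiven μ Y X (fun ω => η.transpose.mulVec (X ω))) :
    CondIndepGiven μ Y X (fun ω => γ.transpose.mulVec (X ω)) := by
  obtain ⟨B, rfl⟩ := exists_eq_mul_of_colSpace_le hsub
  have hηγ : MeasurableSpace.comap (fun ω => (γ * B)ᵀ *ᵥ X ω) inferInstance
      ≤ MeasurableSpace.comap (fun ω => γᵀ *ᵥ X ω) inferInstance :=
    MeasurableSpace.comap_le_comap_of_eq_comp (Bᵀ *ᵥ ·) (by fun_prop)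
      (by ext ω; simp [Matrix.transpose_mul, Matrix.mulVec_mulVec])
  have hγX : MeasurableSpace.comap (fun ω => γᵀ *ᵥ X ω) inferInstance
      ≤ MeasurableSpace.comap X inferInstance :=
    MeasurableSpace.comap_le_comap_of_eq_comp (γᵀ *ᵥ ·) (by fun_prop) rfl
  unfold CondIndepGiven at hDRS ⊢
  rw [condIndepFun_iff_condIndep] at hDRS ⊢
  exact CondIndep.mono_cond (inf_le_inf_right _ hηγ) (inf_le_left.trans hγX) hY.comap_le
    hX.comap_le hDRS
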